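/- If u and v are Fibonacci indexes with u ≤ v in the singularity partial order, then the order of u is at most the order of v (shifting preserves the number of pairs, splitting increases it by one). -/
import Mathlib


/-- The two-letter alphabet. -/
inductive Letter : Type
  | C : Letter
  | D : Letter
deriving DecidableEq, Repr

open Letter

/-- The block `D^i C^j` corresponding to a pair `(i, j)`. -/
def block (p : ℕ × ℕ) : List Letter :=
  List.replicate p.1 D ++ List.replicate p.2 C

/-- A Fibonacci index is a nonempty list `k : List (ℕ × ℕ)`; the word `(C,D)^k`
is `D^{i_0}C^{j_0} ++ [C,D] ++ … ++ [C,D] ++ D^{i_r}C^{j_r}`. -/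
def cdWord (k : List (ℕ × ℕ)) : List Letter :=
  List.intercalate [C, D] (k.map block)

/-- The degree `2·Σ i_n + Σ j_n + 3r` of a Fibonacci index of order `r + 1`. -/
def degree (k : List (ℕ × ℕ)) : ℕ :=
  2 * (k.map Prod.fst).sum + (k.map Prod.snd).sum + 3 * (k.length - 1)

/-- The generating relations of the singularity partial order: shifting,
splitting, and concatenation (`x`, `y` may be empty). -/
inductive SingStep : List (ℕ × ℕ) → List (ℕ × ℕ) → Prop
  | shift (a b c d : ℕ) : SingStep [(a, c), (b, d + 1)] [(a, c + 1), (b, d)]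
  | split (a b c : ℕ) : SingStep [(a + b + 1, c + 1)] [(a, 0), (b, c)]
  | concat (x y : List (ℕ × ℕ)) {u v : List (ℕ × ℕ)} :
      SingStep u v → SingStep (x ++ u ++ y) (x ++ v ++ y)

/-- The singularity partial order: reflexive–transitive closure of `SingStep`. -/
def SingLE (u v : List (ℕ × ℕ)) : Prop := Relation.ReflTransGen SingStep u v

lemma length_le_of_singStep {u v : List (ℕ × ℕ)} (h : SingStep u v) :
    u.length ≤ v.length := by
  induction h with
  | shift => simp
  | split => simp
  | concat x y _ ih => simpa using ih

/-- If `u ≤ v` in the singularity partial order, then the order of `u` (its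
number of pairs) is at most the order of `v`. -/
theorem length_le_of_singLE (u v : List (ℕ × ℕ)) (h : SingLE u v) :
    u.length ≤ v.length := by
  induction h with
  | refl => exact le_refl _
  | tail _ h ih => exact ih.trans (length_le_of_singStep h)
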